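/- arXiv:1508.02793 — 3 statements merged into one kernel-verified Lean document; each statement's English description precedes it below -/
import Mathlib

section
/- The number of Motzkin paths of length n ≥ 1 with exactly one ascent equals Fib(n+3) − n − 2, where Fib is the Fibonacci sequence with Fib(0)=0, Fib(1)=1. -/
inductive Step : Type
  | U | F | D
  deriving DecidableEq

instance instFintypeStep : Fintype Step :=
  ⟨{Step.U, Step.F, Step.D}, fun x => by cases x <;> simp⟩

def stepVal : Step → ℤ
  | .U => 1
  | .F => 0
  | .D => -1

/-- Height of the path after the first `i` steps. -/
def ht (p : List Step) (i : ℕ) : ℤ := ((p.take i).map stepVal).sum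

/-- A Motzkin path: starts and ends at height 0 and stays nonnegative. -/
def IsMotzkin (p : List Step) : Prop :=
  ht p p.length = 0 ∧ ∀ i ≤ p.length, 0 ≤ ht p i

instance : DecidablePred IsMotzkin := fun p => by
  unfold IsMotzkin; infer_instance

/-- Number of ascents: maximal runs of up steps (counted at their last up step). -/
def asc (p : List Step) : ℕ :=
  ((List.range p.length).filter
    (fun i => p[i]? == some Step.U && p[i+1]? != some Step.U)).length

/-- Number of occurrences of `w` as a consecutive subword of `p`. -/
def countSubword (w p : List Step) : ℕ :=
  ((List.range p.length).filter (fun i => w.isPrefixOf (p.drop i))).length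

/-- Number of plateaus: occurrences of a subword U F^k D for some k ≥ 0. -/
def plt (p : List Step) : ℕ :=
  ((List.range p.length).filter (fun i =>
    (List.range p.length).any (fun k =>
      (Step.U :: (List.replicate k Step.F ++ [Step.D])).isPrefixOf (p.drop i)))).length

/-!
A path has exactly one ascent iff it reads `r U^k q` with `k > 0` and no up step in `r` or `q`.
Its height is then `-#D` along `r` and `k - #D` along `q`, so it is a Motzkin path iff `r = F^a`
and `q` has exactly `k` down steps. The paths of length `n` thus correspond to the triples
`(a, k, q)` with `q` one of the `C(n - a - k, k)` words over `{F, D}` with `k` down steps.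
Summing over `k ≥ 1` gives `fib (n - a + 1) - 1` (a shallow diagonal of Pascal's triangle without
its `k = 0` term), and summing over `a` gives `fib (n + 3) - 1 - (n + 1)`.
-/

open Finset Step

theorem asc_cons (x : Step) (p : List Step) :
    asc (x :: p) = asc p + if x = U ∧ p.head? ≠ some U then 1 else 0 := by
  unfold asc
  rw [List.length_cons, List.range_succ_eq_map, List.filter_cons, List.filter_map]
  simp only [Function.comp_def, Nat.succ_eq_add_one, List.getElem?_cons_succ]
  have hfirst : ((x :: p)[0]? == some U && p[0]? != some U) = true ↔
      x = U ∧ p.head? ≠ some U := by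
    cases p <;> simp
  split_ifs <;> simp_all

theorem asc_eq_zero_iff {p : List Step} : asc p = 0 ↔ U ∉ p := by
  induction p with
  | nil => simp [asc]
  | cons x p ih =>
    rw [asc_cons]
    cases x <;> cases p <;> grind

theorem asc_append_of_notMem {r : List Step} (hr : U ∉ r) (s : List Step) :
    asc (r ++ s) = asc s := by
  induction r with
  | nil => rfl
  | cons x r ih =>
    rw [List.cons_append, asc_cons]
    grind

theorem asc_replicate_append {k : ℕ} (hk : 0 < k) {q : List Step} (hq : U ∉ q) :
    asc (List.replicate k U ++ q) = 1 := by
  induction k with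
  | zero => omega
  | succ k ih =>
    rw [List.replicate_succ, List.cons_append, asc_cons]
    rcases k with _ | k
    · have hhead : q.head? ≠ some U := fun h => hq (List.mem_of_mem_head? h)
      simp [asc_eq_zero_iff.2 hq, hhead]
    · rw [ih k.succ_pos]
      simp [List.replicate_succ]

theorem asc_eq_one_iff {p : List Step} :
    asc p = 1 ↔
      ∃ r k q, U ∉ r ∧ 0 < k ∧ U ∉ q ∧ p = r ++ List.replicate k U ++ q := by
  refine ⟨fun h => ?_, ?_⟩
  · induction p with
    | nil => simp [asc] at h
    | cons x p ih =>
      rw [asc_cons] at h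
      split_ifs at h with hx
      · obtain ⟨rfl, -⟩ := hx
        exact ⟨[], 1, p, List.not_mem_nil, one_pos, asc_eq_zero_iff.1 (by omega), rfl⟩
      · obtain ⟨r, k, q, hr, hk, hq, rfl⟩ := ih h
        by_cases hxU : x = U
        · obtain rfl : r = [] := by
            cases r <;> grind
          exact ⟨[], k + 1, q, List.not_mem_nil, k.succ_pos, hq,
            by simp [hxU, List.replicate_succ]⟩
        · exact ⟨x :: r, k, q, by grind, hk, hq, rfl⟩
  · rintro ⟨r, k, q, hr, hk, hq, rfl⟩
    rw [List.append_assoc, asc_append_of_notMem hr, asc_replicate_append hk hq]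

theorem sum_map_stepVal (p : List Step) :
    (p.map stepVal).sum = p.count U - p.count D := by
  induction p with
  | nil => simp
  | cons x p ih => cases x <;> simp [stepVal, ih] <;> ring

theorem isMotzkin_iff_count {p : List Step} :
    IsMotzkin p ↔ p.count D = p.count U ∧ ∀ i, (p.take i).count D ≤ (p.take i).count U := by
  simp only [IsMotzkin, ht, sum_map_stepVal, List.take_length, sub_nonneg, Nat.cast_le]
  refine ⟨fun ⟨htotal, hprefix⟩ => ⟨by omega, fun i => ?_⟩,
    fun ⟨htotal, hprefix⟩ => ⟨by omega, fun i _ => hprefix i⟩⟩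
  rcases le_or_gt i p.length with h | h
  · exact hprefix i h
  · rw [List.take_of_length_le h.le]
    omega

theorem isMotzkin_append_replicate_append {r q : List Step} {k : ℕ} (hr : U ∉ r)
    (hq : U ∉ q) : IsMotzkin (r ++ List.replicate k U ++ q) ↔ D ∉ r ∧ q.count D = k := by
  set p := r ++ List.replicate k U ++ q with hp
  have hrU := List.count_eq_zero.2 hr
  have hpD : p.count D = r.count D + q.count D := by simp [hp, List.count_replicate]
  have hpU : p.count U = k := by simp [hp, hrU, List.count_eq_zero.2 hq]
  have htake : p.take (r.length + k) = r ++ List.replicate k U := by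
    rw [hp, List.take_left' (by simp)]
  rw [isMotzkin_iff_count, hpD, hpU, ← List.count_eq_zero]
  constructor
  · rintro ⟨htotal, hprefix⟩
    have := hprefix r.length
    rw [hp, List.append_assoc, List.take_left' rfl, hrU] at this
    omega
  · rintro ⟨hrD, hqD⟩
    refine ⟨by omega, fun i => ?_⟩
    rcases le_total i (r.length + k) with h | h
    · calc (p.take i).count D ≤ (p.take (r.length + k)).count D :=
            (List.take_sublist_take_left h).count_le _
        _ = 0 := by simp [htake, hrD, List.count_replicate]
        _ ≤ _ := Nat.zero_le _
    · calc (p.take i).count D ≤ p.count D := (List.take_sublist _ _).count_le _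
        _ = (p.take (r.length + k)).count U := by simp [hpD, htake, hrD, hqD, hrU]
        _ ≤ (p.take i).count U := (List.take_sublist_take_left h).count_le _

theorem eq_replicate_F_of_notMem {r : List Step} (hU : U ∉ r) (hD : D ∉ r) :
    r = List.replicate r.length F :=
  List.eq_replicate_iff.2 ⟨rfl, fun x hx => by cases x <;> simp_all⟩

theorem isMotzkin_and_asc_eq_one_iff {p : List Step} :
    IsMotzkin p ∧ asc p = 1 ↔ ∃ a k q, U ∉ q ∧ q.count D = k + 1 ∧
      p = List.replicate a F ++ List.replicate (k + 1) U ++ q := by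
  rw [asc_eq_one_iff]
  constructor
  · rintro ⟨hM, r, k, q, hr, hk, hq, rfl⟩
    obtain ⟨hrD, hqD⟩ := (isMotzkin_append_replicate_append hr hq).1 hM
    obtain ⟨k, rfl⟩ := Nat.exists_eq_succ_of_ne_zero hk.ne'
    exact ⟨r.length, k, q, hq, hqD, by rw [← eq_replicate_F_of_notMem hr hrD]⟩
  · rintro ⟨a, k, q, hq, hqD, rfl⟩
    have hr : U ∉ List.replicate a F := by simp
    exact ⟨(isMotzkin_append_replicate_append hr hq).2 ⟨by simp, hqD⟩,
      _, _, _, hr, k.succ_pos, hq, rfl⟩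

def listsOfLength {α : Type*} [Fintype α] [DecidableEq α] (n : ℕ) : Finset (List α) :=
  univ.image (List.ofFn (n := n))

theorem mem_listsOfLength {α : Type*} [Fintype α] [DecidableEq α] {n : ℕ} {p : List α} :
    p ∈ listsOfLength n ↔ p.length = n := by
  refine ⟨fun h => ?_, ?_⟩
  · obtain ⟨f, -, rfl⟩ := mem_image.1 h
    exact List.length_ofFn
  · rintro rfl
    exact mem_image.2 ⟨fun i => p[i], mem_univ _, List.ofFn_getElem⟩

def flatDownWords (m k : ℕ) : Finset (List Step) :=
  (listsOfLength m).filter fun q => U ∉ q ∧ q.count D = k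

theorem mem_flatDownWords {m k : ℕ} {q : List Step} :
    q ∈ flatDownWords m k ↔ q.length = m ∧ U ∉ q ∧ q.count D = k := by
  rw [flatDownWords, mem_filter, mem_listsOfLength]

theorem flatDownWords_succ_zero (m : ℕ) :
    flatDownWords (m + 1) 0 = (flatDownWords m 0).map ⟨(F :: ·), List.cons_injective⟩ := by
  ext q
  rcases q with _ | ⟨x, q⟩
  · simp [mem_flatDownWords]
  · cases x <;> simp [mem_flatDownWords]

theorem flatDownWords_succ_succ (m k : ℕ) :
    flatDownWords (m + 1) (k + 1) =
      (flatDownWords m (k + 1)).map ⟨(F :: ·), List.cons_injective⟩ ∪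
        (flatDownWords m k).map ⟨(D :: ·), List.cons_injective⟩ := by
  ext q
  rcases q with _ | ⟨x, q⟩
  · simp [mem_flatDownWords]
  · cases x <;> simp [mem_flatDownWords]

theorem card_flatDownWords (m k : ℕ) : #(flatDownWords m k) = m.choose k := by
  induction m generalizing k with
  | zero =>
    rcases k with _ | k
    · rw [show flatDownWords 0 0 = {[]} by ext q; cases q <;> simp [mem_flatDownWords]]
      rfl
    · rw [show flatDownWords 0 (k + 1) = ∅ by ext q; cases q <;> simp [mem_flatDownWords]]
      rfl
  | succ m ih =>
    rcases k with _ | k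
    · rw [flatDownWords_succ_zero, card_map, ih, Nat.choose_zero_right, Nat.choose_zero_right]
    · rw [flatDownWords_succ_succ, card_union_of_disjoint (by simp [disjoint_left]), card_map,
        card_map, ih, ih, Nat.choose_succ_succ', add_comm]

theorem sum_range_choose_eq_fib (m : ℕ) :
    ∑ k ∈ range (m + 1), (m - k).choose k = Nat.fib (m + 1) := by
  rw [Nat.fib_succ_eq_sum_choose, ← Nat.sum_antidiagonal_swap]
  exact (Nat.sum_antidiagonal_eq_sum_range_succ (fun i j => j.choose i) m).symm

theorem sum_range_choose_succ_add_one (m : ℕ) :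
    ∑ k ∈ range m, (m - (k + 1)).choose (k + 1) + 1 = Nat.fib (m + 1) := by
  rw [← sum_range_choose_eq_fib, sum_range_succ']
  simp

theorem sum_range_fib_succ (n : ℕ) :
    ∑ a ∈ range (n + 1), Nat.fib (n - a + 1) + 1 = Nat.fib (n + 3) := by
  rw [Nat.fib_succ_eq_succ_sum (n + 2), sum_range_succ' _ (n + 1), Nat.fib_zero, add_zero,
    ← sum_range_reflect]
  refine congrArg (· + 1) (sum_congr rfl fun a ha => ?_)
  rw [mem_range] at ha
  congr 1
  omega

theorem replicate_append_replicate_append_inj {a a' k k' : ℕ} {q q' : List Step}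
    (hq : U ∉ q) (hq' : U ∉ q')
    (h : List.replicate a F ++ List.replicate (k + 1) U ++ q =
      List.replicate a' F ++ List.replicate (k' + 1) U ++ q') :
    a = a' ∧ k = k' ∧ q = q' := by
  have ha : a = a' := by
    simpa [List.idxOf_append_of_notMem, List.replicate_succ] using congrArg (List.idxOf U) h
  subst ha
  rw [List.append_assoc, List.append_assoc, List.append_cancel_left_eq] at h
  have hk : k = k' := by
    simpa [List.count_eq_zero.2 hq, List.count_eq_zero.2 hq'] using congrArg (List.count U) h
  subst hk
  exact ⟨rfl, rfl, List.append_cancel_left h⟩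

/-- `⟨⟨a, k⟩, q⟩` stands for the path `F^a U^(k+1) q`. -/
def oneAscentData (n : ℕ) : Finset (Σ _ : (Σ _ : ℕ, ℕ), List Step) :=
  ((range (n + 1)).sigma fun a => range (n - a)).sigma fun x =>
    flatDownWords (n - x.1 - (x.2 + 1)) (x.2 + 1)

theorem filter_isMotzkin_asc_eq_one_eq_image (n : ℕ) :
    (listsOfLength n).filter (fun p => IsMotzkin p ∧ asc p = 1) = (oneAscentData n).image
      fun y => List.replicate y.1.1 F ++ List.replicate (y.1.2 + 1) U ++ y.2 := by
  ext p
  simp only [mem_filter, mem_listsOfLength, isMotzkin_and_asc_eq_one_iff, oneAscentData, mem_image,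
    mem_sigma, mem_range, mem_flatDownWords, Sigma.exists]
  constructor
  · rintro ⟨rfl, a, k, q, hq, hqD, rfl⟩
    refine ⟨a, k, q, ⟨⟨?_, ?_⟩, ?_, hq, hqD⟩, rfl⟩ <;>
      simp only [List.length_append, List.length_replicate] <;> omega
  · rintro ⟨a, k, q, ⟨⟨ha, hk⟩, hlen, hq, hqD⟩, rfl⟩
    refine ⟨?_, a, k, q, hq, hqD, rfl⟩
    simp only [List.length_append, List.length_replicate]
    omega

theorem card_filter_isMotzkin_asc_eq_one (n : ℕ) :
    #((listsOfLength n).filter fun p => IsMotzkin p ∧ asc p = 1) =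
      ∑ a ∈ range (n + 1), ∑ k ∈ range (n - a), (n - a - (k + 1)).choose (k + 1) := by
  rw [filter_isMotzkin_asc_eq_one_eq_image, card_image_of_injOn, oneAscentData, card_sigma,
    sum_sigma]
  · simp only [card_flatDownWords]
  · rintro ⟨⟨a, k⟩, q⟩ hy ⟨⟨a', k'⟩, q'⟩ hy' h
    simp only [oneAscentData, coe_sigma, Set.mem_sigma_iff, mem_coe, mem_flatDownWords] at hy hy'
    obtain ⟨rfl, rfl, rfl⟩ := replicate_append_replicate_append_inj hy.2.2.1 hy'.2.2.1 h
    rfl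

theorem natCard_subtype_length_eq_card_filter {α : Type*} [Fintype α] [DecidableEq α] (n : ℕ)
    (P : List α → Prop) [DecidablePred P] :
    Nat.card {p : List α // p.length = n ∧ P p} = #((listsOfLength n).filter P) := by
  rw [← Nat.card_eq_finsetCard]
  exact Nat.card_congr (Equiv.subtypeEquivRight fun p => by rw [mem_filter, mem_listsOfLength])

theorem motzkin_one_ascent_general (n : ℕ) :
    Nat.card {p : List Step // p.length = n ∧ IsMotzkin p ∧ asc p = 1}
      = Nat.fib (n + 3) - (n + 2) := by
  rw [natCard_subtype_length_eq_card_filter, card_filter_isMotzkin_asc_eq_one]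
  have hsum := sum_range_fib_succ n
  rw [← sum_congr rfl fun a _ => sum_range_choose_succ_add_one (n - a), sum_add_distrib,
    sum_const, card_range, smul_eq_mul, mul_one] at hsum
  omega

/-- The number of Motzkin paths of length n ≥ 1 with exactly one ascent is
Fib(n+3) − n − 2. -/
theorem motzkin_one_ascent (n : ℕ) (hn : 1 ≤ n) :
    Nat.card {p : List Step // p.length = n ∧ IsMotzkin p ∧ asc p = 1}
      = Nat.fib (n + 3) - (n + 2) :=
  motzkin_one_ascent_general n
end

section
/- The number of Motzkin paths of length n ≥ 1 with exactly one plateau equals 2^(n−1) − 1. -/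
instance : Fintype Step :=
  ⟨{Step.U, Step.F, Step.D}, fun x => by cases x <;> simp⟩

/-!
Deleting the flat steps of a Motzkin path gives a Dyck path, and the plateaus `U F^k D` of the
path become exactly the peaks `UD` of that Dyck path. A Dyck path with a single peak is a
pyramid `U^b D^b`, so a path counted here is a pyramid with flat steps interleaved; it is
determined by the set of positions of its non-flat steps, which may be any subset of even,
nonzero size. Among the `2^n` subsets of positions exactly half have even size, and the empty
one is excluded.
-/

open List

@[simp] def Step.isUpOrDown : Step → Bool
  | .F => false
  | _ => true

def removeFlats (p : List Step) : List Step := p.filter Step.isUpOrDown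

@[simp] lemma removeFlats_nil : removeFlats [] = [] := rfl

@[simp] lemma removeFlats_cons_F (t : List Step) : removeFlats (.F :: t) = removeFlats t := rfl

@[simp] lemma removeFlats_cons_U (t : List Step) :
    removeFlats (.U :: t) = .U :: removeFlats t := rfl

@[simp] lemma removeFlats_cons_D (t : List Step) :
    removeFlats (.D :: t) = .D :: removeFlats t := rfl

lemma F_notMem_removeFlats (p : List Step) : Step.F ∉ removeFlats p := by
  simp [removeFlats]

def peaks : List Step → ℕ
  | [] => 0
  | .U :: t => peaks t + if t.head? = some .D then 1 else 0
  | _ :: t => peaks t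

def startsWithPlateau : List Step → Bool
  | .U :: t => (removeFlats t).head? == some .D
  | _ => false

lemma exists_flats_D_prefix_iff (t : List Step) :
    (∃ k, replicate k Step.F ++ [.D] <+: t) ↔ (removeFlats t).head? = some .D := by
  induction t with
  | nil => simp
  | cons x t ih =>
    cases x with
    | U =>
      simp only [removeFlats_cons_U, head?_cons]
      constructor <;> rintro ⟨_ | k, h⟩ <;> simp_all [replicate_succ]
    | F =>
      rw [removeFlats_cons_F, ← ih]
      constructor
      · rintro ⟨_ | k, h⟩
        · simp at h
        · exact ⟨k, by simpa [replicate_succ] using h⟩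
      · rintro ⟨k, h⟩
        exact ⟨k + 1, by simpa [replicate_succ] using h⟩
    | D => exact ⟨fun _ => by simp, fun _ => ⟨0, by simp⟩⟩

lemma startsWithPlateau_iff (q : List Step) :
    startsWithPlateau q ↔ ∃ k, Step.U :: (replicate k Step.F ++ [.D]) <+: q := by
  rcases q with _ | ⟨_ | _ | _, t⟩ <;> simp [startsWithPlateau, exists_flats_D_prefix_iff]

lemma plt_eq_countP (p : List Step) :
    plt p = (range p.length).countP fun i => startsWithPlateau (p.drop i) := by
  rw [plt, ← countP_eq_length_filter]
  refine countP_congr fun i _ => ?_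
  simp only [any_eq_true, mem_range, isPrefixOf_iff_prefix, startsWithPlateau_iff]
  refine ⟨fun ⟨k, _, h⟩ => ⟨k, h⟩, fun ⟨k, h⟩ => ⟨k, ?_, h⟩⟩
  have hk : k + 1 < p.length - i := by simpa using h.length_le
  omega

lemma plt_cons (x : Step) (t : List Step) :
    plt (x :: t) = plt t + if startsWithPlateau (x :: t) then 1 else 0 := by
  simp only [plt_eq_countP, length_cons, range_succ_eq_map, countP_cons, countP_map]
  rfl

lemma plt_eq_peaks_removeFlats (p : List Step) : plt p = peaks (removeFlats p) := by
  induction p with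
  | nil => rfl
  | cons x t ih => cases x <;> simp [plt_cons, ih, peaks, startsWithPlateau]

lemma isMotzkin_iff_prefix (p : List Step) :
    IsMotzkin p ↔ (p.map stepVal).sum = 0 ∧ ∀ q, q <+: p → 0 ≤ (q.map stepVal).sum := by
  refine and_congr (by rw [ht, take_length]) ⟨fun h q hq => ?_, fun h i _ => h _ (take_prefix i p)⟩
  obtain ⟨r, rfl⟩ := hq
  simpa [ht] using h q.length (by simp)

@[simp] lemma sum_map_stepVal_replicate (a : ℕ) (x : Step) :
    ((replicate a x).map stepVal).sum = a * stepVal x := by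
  simp [map_replicate, sum_replicate]

lemma sum_map_stepVal_removeFlats (p : List Step) :
    ((removeFlats p).map stepVal).sum = (p.map stepVal).sum := by
  induction p with
  | nil => rfl
  | cons x t ih => cases x <;> simp [stepVal, ← ih]

lemma prefix_removeFlats_iff {u p : List Step} :
    u <+: removeFlats p ↔ ∃ q, q <+: p ∧ u = removeFlats q :=
  prefix_filter_iff

lemma isMotzkin_removeFlats_iff (p : List Step) : IsMotzkin (removeFlats p) ↔ IsMotzkin p := by
  simp only [isMotzkin_iff_prefix, sum_map_stepVal_removeFlats, prefix_removeFlats_iff]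
  refine and_congr_right fun _ => ⟨fun h q hq => ?_, fun h u ⟨q, hq, hu⟩ => ?_⟩
  · simpa [sum_map_stepVal_removeFlats] using h _ ⟨q, hq, rfl⟩
  · simpa [hu, sum_map_stepVal_removeFlats] using h q hq

def pyramid (b : ℕ) : List Step := replicate b .U ++ replicate b .D

@[simp] lemma length_pyramid (b : ℕ) : (pyramid b).length = 2 * b := by
  simp [pyramid, two_mul]

lemma F_notMem_pyramid (b : ℕ) : Step.F ∉ pyramid b := by
  simp [pyramid, mem_replicate]

lemma isMotzkin_pyramid (b : ℕ) : IsMotzkin (pyramid b) := by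
  refine ⟨by rw [ht, take_length]; simp [pyramid, stepVal], fun i _ => ?_⟩
  simp only [ht, pyramid, take_append, take_replicate, length_replicate, map_append, sum_append,
    sum_map_stepVal_replicate, stepVal]
  omega

lemma peaks_replicate_D (j : ℕ) : peaks (replicate j .D) = 0 := by
  induction j with
  | zero => rfl
  | succ j ih => simpa [replicate_succ, peaks] using ih

lemma peaks_replicate_U_append_D_cons {a : ℕ} (ha : a ≠ 0) (s : List Step) :
    peaks (replicate a .U ++ .D :: s) = peaks s + 1 := by
  induction a with
  | zero => contradiction
  | succ a ih =>
    rcases eq_or_ne a 0 with rfl | ha'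
    · simp [peaks]
    · obtain ⟨a, rfl⟩ := Nat.exists_eq_add_one_of_ne_zero ha'
      simpa [replicate_succ, peaks] using ih

lemma peaks_pyramid {b : ℕ} (hb : b ≠ 0) : peaks (pyramid b) = 1 := by
  obtain ⟨j, rfl⟩ := Nat.exists_eq_add_one_of_ne_zero hb
  rw [pyramid, replicate_succ (a := Step.D), peaks_replicate_U_append_D_cons hb,
    peaks_replicate_D]

lemma exists_eq_replicate_U_append (w : List Step) :
    ∃ a s, w = replicate a .U ++ s ∧ s.head? ≠ some .U := by
  induction w with
  | nil => exact ⟨0, [], by simp⟩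
  | cons x t ih =>
    by_cases hx : x = .U
    · obtain ⟨a, s, rfl, hs⟩ := ih
      exact ⟨a + 1, s, by simp [hx, replicate_succ], hs⟩
    · exact ⟨0, x :: t, by simp, by simpa using hx⟩

lemma eq_replicate_D_append_replicate_U_of_peaks_eq_zero {s : List Step} (hF : .F ∉ s)
    (h : peaks s = 0) : ∃ j i, s = replicate j .D ++ replicate i .U := by
  induction s with
  | nil => exact ⟨0, 0, rfl⟩
  | cons x t ih =>
    rw [mem_cons, not_or] at hF
    cases x with
    | F => exact absurd rfl hF.1
    | D =>
      obtain ⟨j, i, rfl⟩ := ih hF.2 h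
      exact ⟨j + 1, i, rfl⟩
    | U =>
      simp only [peaks, Nat.add_eq_zero_iff, ite_eq_right_iff, one_ne_zero, imp_false] at h
      obtain ⟨_ | j, i, rfl⟩ := ih hF.2 h.1
      · exact ⟨0, i + 1, by simp [replicate_succ]⟩
      · simp [replicate_succ] at h

/-- Peel off the initial ascent `U^a`: the single peak follows it, and after the peak there is
no further `UD`, so the rest is `D^j U^i`; the height constraints force `i = 0` and `a = j + 1`. -/
lemma eq_pyramid_of_peaks_eq_one {w : List Step} (hF : .F ∉ w) (hw : IsMotzkin w)
    (h : peaks w = 1) : ∃ b ≠ 0, w = pyramid b := by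
  rw [isMotzkin_iff_prefix] at hw
  obtain ⟨a, s, rfl, hs⟩ := exists_eq_replicate_U_append w
  rcases s with _ | ⟨_ | _ | _, s⟩
  · obtain rfl : a = 0 := by simpa [stepVal] using hw.1
    simp [peaks] at h
  · simp at hs
  · simp at hF
  obtain rfl | ha := eq_or_ne a 0
  · simpa [stepVal] using hw.2 [.D] (by simp)
  rw [peaks_replicate_U_append_D_cons ha, Nat.add_eq_right] at h
  obtain ⟨j, i, rfl⟩ := eq_replicate_D_append_replicate_U_of_peaks_eq_zero (by simp_all) h
  have hsplit : replicate a Step.U ++ Step.D :: (replicate j .D ++ replicate i .U) =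
      replicate a Step.U ++ replicate (j + 1) .D ++ replicate i .U := by
    simp [replicate_succ]
  rw [hsplit] at hw ⊢
  have hpeak := hw.2 _ (prefix_append _ _)
  have htotal := hw.1
  simp [stepVal] at hpeak htotal
  obtain rfl : i = 0 := by omega
  exact ⟨a, ha, by simp [pyramid]; omega⟩

lemma isMotzkin_and_plt_eq_one_iff (p : List Step) :
    IsMotzkin p ∧ plt p = 1 ↔ ∃ b ≠ 0, removeFlats p = pyramid b := by
  rw [← isMotzkin_removeFlats_iff, plt_eq_peaks_removeFlats]
  constructor
  · rintro ⟨hw, h⟩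
    exact eq_pyramid_of_peaks_eq_one (F_notMem_removeFlats p) hw h
  · rintro ⟨b, hb, hp⟩
    exact hp ▸ ⟨isMotzkin_pyramid b, peaks_pyramid hb⟩

def fillFlats : List Bool → List Step → List Step
  | [], _ => []
  | false :: m, w => .F :: fillFlats m w
  | true :: _, [] => []
  | true :: m, x :: w => x :: fillFlats m w

lemma fillFlats_map_removeFlats (p : List Step) :
    fillFlats (p.map Step.isUpOrDown) (removeFlats p) = p := by
  induction p with
  | nil => rfl
  | cons x t ih => cases x <;> simp [fillFlats, ih]

lemma count_true_map_isUpOrDown (p : List Step) :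
    (p.map Step.isUpOrDown).count true = (removeFlats p).length := by
  induction p with
  | nil => rfl
  | cons x t ih => cases x <;> simp [ih]

section FillFlats

variable {m : List Bool} {w : List Step}

lemma length_fillFlats (hm : m.count true = w.length) : (fillFlats m w).length = m.length := by
  induction m generalizing w with
  | nil => rfl
  | cons b m ih => cases b <;> cases w <;> simp_all [fillFlats]

lemma map_fillFlats (hw : .F ∉ w) (hm : m.count true = w.length) :
    (fillFlats m w).map Step.isUpOrDown = m := by
  induction m generalizing w with
  | nil => rfl
  | cons b m ih => cases b <;> cases w <;> simp_all [fillFlats, eq_comm (b := Step.F)]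

lemma removeFlats_fillFlats (hw : .F ∉ w) (hm : m.count true = w.length) :
    removeFlats (fillFlats m w) = w := by
  induction m generalizing w with
  | nil => simp_all [fillFlats, eq_comm (a := 0)]
  | cons b m ih => cases b <;> rcases w with _ | ⟨_ | _ | _, w⟩ <;> simp_all [fillFlats]

end FillFlats

def upOrDownMaskEquiv (n : ℕ) :
    {p : List Step // p.length = n ∧ ∃ b ≠ 0, removeFlats p = pyramid b} ≃
    {m : List Bool // m.length = n ∧ Even (m.count true) ∧ m.count true ≠ 0} where
  toFun p := ⟨p.1.map Step.isUpOrDown, by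
    obtain ⟨hlen, b, hb, hp⟩ := p.2
    rw [count_true_map_isUpOrDown, hp, length_pyramid, length_map]
    exact ⟨hlen, even_two_mul b, by omega⟩⟩
  invFun m := ⟨fillFlats m.1 (pyramid (m.1.count true / 2)), by
    obtain ⟨hlen, heven, hne⟩ := m.2
    have hm : m.1.count true = (pyramid (m.1.count true / 2)).length := by
      rw [length_pyramid, Nat.two_mul_div_two_of_even heven]
    refine ⟨(length_fillFlats hm).trans hlen, m.1.count true / 2, ?_,
      removeFlats_fillFlats (F_notMem_pyramid _) hm⟩
    exact Nat.div_ne_zero_iff_of_dvd heven.two_dvd |>.2 ⟨hne, two_ne_zero⟩⟩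
  left_inv p := by
    obtain ⟨p, -, b, -, hp⟩ := p
    refine Subtype.ext ?_
    have hb : (p.map Step.isUpOrDown).count true / 2 = b := by
      simp [count_true_map_isUpOrDown, hp]
    simp only [hb, ← hp, fillFlats_map_removeFlats]
  right_inv m := by
    obtain ⟨m, -, heven, -⟩ := m
    refine Subtype.ext (map_fillFlats (F_notMem_pyramid _) ?_)
    rw [length_pyramid, Nat.two_mul_div_two_of_even heven]

lemma even_count_true_cons_iff (c : Bool) (t : List Bool) :
    Even ((c :: t).count true) ↔ c = decide (Odd (t.count true)) := by
  cases c <;> simp [Nat.even_add_one]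

/-- The first entry of an even-weight list is the parity bit of the rest. -/
def evenCountTailEquiv (k : ℕ) :
    {m : List Bool // m.length = k + 1 ∧ Even (m.count true) ∧ m.count true ≠ 0} ≃
    {t : List Bool // t.length = k ∧ t.count true ≠ 0} where
  toFun m := ⟨m.1.tail, by
    obtain ⟨_ | ⟨c, t⟩, hlen, heven, hne⟩ := m
    · simp at hlen
    · rw [even_count_true_cons_iff] at heven
      refine ⟨by simpa using hlen, fun h0 => hne ?_⟩
      replace h0 : t.count true = 0 := h0
      simp [heven, h0]⟩
  invFun t := ⟨decide (Odd (t.1.count true)) :: t.1, by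
    obtain ⟨t, hlen, hne⟩ := t
    refine ⟨by simp [hlen], (even_count_true_cons_iff _ _).2 rfl, ?_⟩
    exact (Nat.pos_of_ne_zero hne |>.trans_le count_le_count_cons).ne'⟩
  left_inv m := by
    obtain ⟨_ | ⟨c, t⟩, hlen, heven, -⟩ := m
    · simp at hlen
    · simp [(even_count_true_cons_iff c t).1 heven]
  right_inv _ := rfl

lemma card_count_true_ne_zero (k : ℕ) :
    Nat.card {t : List Bool // t.length = k ∧ t.count true ≠ 0} = 2 ^ k - 1 := by
  have hset : {t : List Bool | t.length = k ∧ t.count true ≠ 0} =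
      {t | t.length = k} \ {replicate k false} := by
    ext t
    simp [count_eq_zero, eq_replicate_iff]
    tauto
  calc Nat.card {t : List Bool // t.length = k ∧ t.count true ≠ 0}
      = ({t : List Bool | t.length = k} \ {replicate k false}).ncard := by rw [← hset]; rfl
    _ = Nat.card (List.Vector Bool k) - 1 := by
      rw [Set.ncard_sdiff_singleton_of_mem (by simp)]; rfl
    _ = 2 ^ k - 1 := by rw [Nat.card_eq_fintype_card, card_vector, Fintype.card_bool]

/-- The number of Motzkin paths of length n ≥ 1 with exactly one plateau is
2^(n−1) − 1. -/
theorem motzkin_one_plateau (n : ℕ) (hn : 1 ≤ n) :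
    Nat.card {p : List Step // p.length = n ∧ IsMotzkin p ∧ plt p = 1}
      = 2 ^ (n - 1) - 1 := by
  obtain ⟨k, rfl⟩ := Nat.exists_eq_add_of_le' hn
  have e : {p : List Step // p.length = k + 1 ∧ IsMotzkin p ∧ plt p = 1} ≃
      {t : List Bool // t.length = k ∧ t.count true ≠ 0} :=
    (Equiv.subtypeEquivRight fun p => and_congr_right fun _ => isMotzkin_and_plt_eq_one_iff p)
      |>.trans (upOrDownMaskEquiv (k + 1)) |>.trans (evenCountTailEquiv k)
  rw [Nat.card_congr e, card_count_true_ne_zero, Nat.add_sub_cancel]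
end

section
/- The generating function for words on the alphabet {a,b,c}, weighted x per letter, that avoid both subwords acb and bc, when words are obtained by traversing a walk from vertex 1 to vertex 2 in the monoid network with arcs 1→1 labeled {b}, 1→2 labeled {a,c}, 2→1 labeled {b,c}, equals (2x − x² + x⁴)/(1 − x − 3x² + 2x³ − x⁵). -/
inductive ABC : Type
  | a | b | c
  deriving DecidableEq

/-- Arcs of the monoid network: 1→1 labeled {b}, 1→2 labeled {a,c}, 2→1 labeled {b,c}
(vertices 1,2 encoded as 0,1 : Fin 2). -/
def arc : Fin 2 → Fin 2 → ABC → Prop := fun u v l =>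
  (u = 0 ∧ v = 0 ∧ l = ABC.b)
    ∨ (u = 0 ∧ v = 1 ∧ (l = ABC.a ∨ l = ABC.c))
    ∨ (u = 1 ∧ v = 0 ∧ (l = ABC.b ∨ l = ABC.c))

/-- `Reach u v w`: the word w is obtained by traversing a walk from u to v,
reading one assigned letter per arc. -/
inductive Reach : Fin 2 → Fin 2 → List ABC → Prop
  | nil (u : Fin 2) : Reach u u []
  | cons {u z v : Fin 2} {l : ABC} {w : List ABC} :
      arc u z l → Reach z v w → Reach u v (l :: w)

/-- Generating function for words from vertex 1 to vertex 2 of the network that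
avoid the consecutive subwords acb and bc, weighted x per letter. -/
noncomputable def Fnet : PowerSeries ℚ :=
  PowerSeries.mk fun n =>
    (Nat.card {w : List ABC // w.length = n ∧ Reach 0 1 w ∧
      ¬ [ABC.a, ABC.c, ABC.b] <:+: w ∧ ¬ [ABC.b, ABC.c] <:+: w} : ℚ)

/-!
A word is read by a deterministic automaton whose state records the current vertex of the network
together with the only suffix that can still grow into a forbidden pattern: a trailing `b` (then `c`
is forbidden), a trailing `ac` (then `b` is forbidden), or a trailing `a`. Splitting the accepted
words by their first letter gives a linear transfer system for the counts; eliminating four of the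
five live states yields `c (n+5) = c (n+4) + 3 c (n+3) - 2 c (n+2) + c n`, so multiplying the
generating function by the characteristic polynomial leaves a polynomial fixed by the first five
counts.
-/

namespace DFA

variable {α σ : Type*} (M : DFA α σ)

noncomputable def countAccepted (s : σ) (n : ℕ) : ℕ :=
  Nat.card {w : List α // w.length = n ∧ w ∈ M.acceptsFrom s}

theorem countAccepted_zero (s : σ) [Decidable (s ∈ M.accept)] :
    M.countAccepted s 0 = if s ∈ M.accept then 1 else 0 := by
  have hw (w : List α) : w.length = 0 ∧ w ∈ M.acceptsFrom s ↔ w = [] ∧ s ∈ M.accept := by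
    constructor
    · rintro ⟨hl, hw⟩
      obtain rfl := List.length_eq_zero_iff.1 hl
      exact ⟨rfl, hw⟩
    · rintro ⟨rfl, h⟩
      exact ⟨rfl, h⟩
  simp only [countAccepted, hw]
  split_ifs with h <;> simp [h]

def acceptedSuccEquiv (s : σ) (n : ℕ) :
    {w : List α // w.length = n + 1 ∧ w ∈ M.acceptsFrom s} ≃
      Σ a : α, {w : List α // w.length = n ∧ w ∈ M.acceptsFrom (M.step s a)} where
  toFun
    | ⟨a :: w, hl, hw⟩ => ⟨a, w, Nat.succ_injective hl, hw⟩
  invFun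
    | ⟨a, w, hl, hw⟩ => ⟨a :: w, congrArg Nat.succ hl, hw⟩
  left_inv
    | ⟨_ :: _, _, _⟩ => rfl
  right_inv
    | ⟨_, _, _, _⟩ => rfl

theorem countAccepted_succ [Fintype α] (s : σ) (n : ℕ) :
    M.countAccepted s (n + 1) = ∑ a, M.countAccepted (M.step s a) n := by
  have (t : σ) : Finite {w : List α // w.length = n ∧ w ∈ M.acceptsFrom t} :=
    ((List.finite_length_eq α n).subset fun w hw => hw.1).to_subtype
  rw [countAccepted, Nat.card_congr (M.acceptedSuccEquiv s n), Nat.card_sigma]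
  rfl

end DFA

instance : Fintype ABC := ⟨{.a, .b, .c}, by rintro (_ | _ | _) <;> simp⟩

theorem ABC.sum_univ {M : Type*} [AddCommMonoid M] (f : ABC → M) :
    ∑ l, f l = f .a + f .b + f .c := by
  simp [Finset.univ, Fintype.elems, add_assoc]

theorem reach_nil_iff {u v : Fin 2} : Reach u v [] ↔ u = v :=
  ⟨fun | .nil _ => rfl, fun h => h ▸ .nil u⟩

theorem reach_cons_iff {u v : Fin 2} {l : ABC} {w : List ABC} :
    Reach u v (l :: w) ↔ ∃ z, arc u z l ∧ Reach z v w :=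
  ⟨fun | .cons h hr => ⟨_, h, hr⟩, fun ⟨_, h, hr⟩ => .cons h hr⟩

def Avoids (w : List ABC) : Prop :=
  ¬ [ABC.a, ABC.c, ABC.b] <:+: w ∧ ¬ [ABC.b, ABC.c] <:+: w

inductive AvoidState
  | at0 | at0AfterB | at0AfterAC | at1 | at1AfterA | dead
  deriving DecidableEq

def AvoidState.step : AvoidState → ABC → AvoidState
  | .at0, .a => .at1AfterA | .at0, .b => .at0AfterB | .at0, .c => .at1
  | .at0AfterB, .a => .at1AfterA | .at0AfterB, .b => .at0AfterB | .at0AfterB, .c => .dead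
  | .at0AfterAC, .a => .at1AfterA | .at0AfterAC, .b => .dead | .at0AfterAC, .c => .at1
  | .at1, .a => .dead | .at1, .b => .at0AfterB | .at1, .c => .at0
  | .at1AfterA, .a => .dead | .at1AfterA, .b => .at0AfterB | .at1AfterA, .c => .at0AfterAC
  | .dead, _ => .dead

def AvoidState.ValidContinuation : AvoidState → List ABC → Prop
  | .at0, w => Reach 0 1 w ∧ Avoids w
  | .at0AfterB, w => (Reach 0 1 w ∧ Avoids w) ∧ ¬ [ABC.c] <+: w
  | .at0AfterAC, w => (Reach 0 1 w ∧ Avoids w) ∧ ¬ [ABC.b] <+: w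
  | .at1, w => Reach 1 1 w ∧ Avoids w
  | .at1AfterA, w => (Reach 1 1 w ∧ Avoids w) ∧ ¬ [ABC.c, ABC.b] <+: w
  | .dead, _ => False

def avoider : DFA ABC AvoidState where
  step := AvoidState.step
  start := .at0
  accept := {.at1, .at1AfterA}

theorem avoider_step (s : AvoidState) (l : ABC) : avoider.step s l = s.step l := rfl

theorem mem_avoider_accept (s : AvoidState) :
    s ∈ avoider.accept ↔ s = .at1 ∨ s = .at1AfterA := Iff.rfl

instance : DecidablePred (· ∈ avoider.accept) := fun s =>
  decidable_of_iff _ (mem_avoider_accept s).symm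

theorem mem_avoider_acceptsFrom (s : AvoidState) (w : List ABC) :
    w ∈ avoider.acceptsFrom s ↔ s.ValidContinuation w := by
  induction w generalizing s with
  | nil =>
    cases s <;>
      simp [DFA.mem_acceptsFrom, avoider, AvoidState.ValidContinuation, Avoids, reach_nil_iff]
  | cons l w ih =>
    simp only [DFA.mem_acceptsFrom, DFA.evalFrom_cons] at ih ⊢
    cases s <;> cases l <;>
      simp_all [avoider, AvoidState.step, AvoidState.ValidContinuation, Avoids, reach_cons_iff,
        arc, List.infix_cons_iff, List.cons_prefix_cons] <;>
      tauto

theorem coeff_Fnet (n : ℕ) : Fnet.coeff n = avoider.countAccepted .at0 n := by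
  simp only [Fnet, PowerSeries.coeff_mk, DFA.countAccepted, mem_avoider_acceptsFrom,
    AvoidState.ValidContinuation, Avoids]

theorem avoider_countAccepted_dead (n : ℕ) : avoider.countAccepted .dead n = 0 := by
  induction n with
  | zero => simp [DFA.countAccepted_zero, mem_avoider_accept]
  | succ n ih =>
    simp only [DFA.countAccepted_succ, avoider_step, AvoidState.step, ih, Finset.sum_const_zero]

section

local notation "N" => avoider.countAccepted

theorem avoider_countAccepted_transfer (n : ℕ) :
    N .at0 (n + 1) = N .at1AfterA n + N .at0AfterB n + N .at1 n ∧
    N .at0AfterB (n + 1) = N .at1AfterA n + N .at0AfterB n ∧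
    N .at0AfterAC (n + 1) = N .at1AfterA n + N .at1 n ∧
    N .at1 (n + 1) = N .at0AfterB n + N .at0 n ∧
    N .at1AfterA (n + 1) = N .at0AfterB n + N .at0AfterAC n := by
  simp only [DFA.countAccepted_succ, ABC.sum_univ, avoider_step, AvoidState.step,
    avoider_countAccepted_dead, add_zero, zero_add, and_self]

theorem avoider_countAccepted_at0_recurrence (n : ℕ) :
    N .at0 (n + 5) + 2 * N .at0 (n + 2) = N .at0 (n + 4) + 3 * N .at0 (n + 3) + N .at0 n := by
  have := avoider_countAccepted_transfer n
  have := avoider_countAccepted_transfer (n + 1)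
  have := avoider_countAccepted_transfer (n + 2)
  have := avoider_countAccepted_transfer (n + 3)
  have := avoider_countAccepted_transfer (n + 4)
  simp only [add_assoc, Nat.reduceAdd] at *
  omega

theorem avoider_countAccepted_at0_initial :
    N .at0 0 = 0 ∧ N .at0 1 = 2 ∧ N .at0 2 = 1 ∧ N .at0 3 = 7 ∧ N .at0 4 = 7 := by
  have := avoider_countAccepted_transfer 0
  have := avoider_countAccepted_transfer 1
  have := avoider_countAccepted_transfer 2
  have := avoider_countAccepted_transfer 3
  simp only [zero_add, Nat.reduceAdd, DFA.countAccepted_zero, mem_avoider_accept, reduceCtorEq,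
    or_self, or_false, false_or, ite_true, ite_false, true_and] at *
  omega

end

open PowerSeries in
theorem Fnet_mul_denominator :
    Fnet * (1 - X - 3 * X ^ 2 + 2 * X ^ 3 - X ^ 5) = 2 * X - X ^ 2 + X ^ 4 := by
  rw [show (2 : ℚ⟦X⟧) = C 2 from (map_ofNat C 2).symm,
    show (3 : ℚ⟦X⟧) = C 3 from (map_ofNat C 3).symm]
  have expand : Fnet * (1 - X - C 3 * X ^ 2 + C 2 * X ^ 3 - X ^ 5) =
      Fnet - Fnet * X ^ 1 - C 3 * (Fnet * X ^ 2) + C 2 * (Fnet * X ^ 3) - Fnet * X ^ 5 := by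
    ring
  ext n
  rw [expand]
  simp only [map_sub, map_add, coeff_C_mul, coeff_mul_X_pow', coeff_X_pow, coeff_X, coeff_Fnet]
  rcases lt_or_ge n 5 with hn | hn
  · obtain ⟨c0, c1, c2, c3, c4⟩ := avoider_countAccepted_at0_initial
    interval_cases n <;> norm_num [c0, c1, c2, c3, c4]
  · obtain ⟨m, rfl⟩ := Nat.exists_eq_add_of_le' hn
    have recurrence := avoider_countAccepted_at0_recurrence m
    qify at recurrence
    simp only [le_add_iff_nonneg_left, zero_le, ↓reduceIte, Nat.add_one_sub_one,
      Nat.reduceSubDiff, add_tsub_cancel_right, Nat.reduceEqDiff, mul_zero, sub_self, add_zero]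
    linarith

/-- That generating function equals (2x − x² + x⁴)/(1 − x − 3x² + 2x³ − x⁵). -/
theorem network_avoiding_gf :
    Fnet = (2 * PowerSeries.X - PowerSeries.X ^ 2 + PowerSeries.X ^ 4)
      * (1 - PowerSeries.X - 3 * PowerSeries.X ^ 2 + 2 * PowerSeries.X ^ 3
          - PowerSeries.X ^ 5)⁻¹ := by
  rw [PowerSeries.eq_mul_inv_iff_mul_eq (by simp)]
  exact Fnet_mul_denominator
end
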